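/- Let p ≥ 1 and 1 ≤ k ≤ 2p be integers, set α_k = 2p+1 if k is odd and α_k = 2p+2 if k is even, and set φ_k = ∑_{j=−p}^{p} δ^k_{p,j} · j^{α_k}. If f : ℝ → ℝ is of class C^{α_k+1} and x ∈ ℝ, then as h → 0⁺ one has (1/h^k) ∑_{j=−p}^{p} δ^k_{p,j} f(x + j·h) − f^{(k)}(x) − (φ_k / α_k!) · h^{α_k − k} · f^{(α_k)}(x) = O(h^{α_k − k + 1}). In particular, the centered (2p+1)-point differentiation formula for the k-th derivative has order of accuracy α_k − k. -/

import Mathlib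

/-- Lagrange basis polynomial `F_{p,j}` on nodes `-p, …, p`. -/
noncomputable def Fpoly (p : ℕ) (j : ℤ) (x : ℝ) : ℝ :=
  ∏ r ∈ (Finset.Icc (-(p:ℤ)) (p:ℤ)).erase j, (x - (r:ℝ)) / ((j:ℝ) - (r:ℝ))

/-- `δ^k_{p,j} = F_{p,j}^{(k)}(0)`. -/
noncomputable def delta (p k : ℕ) (j : ℤ) : ℝ := iteratedDeriv k (Fpoly p j) 0
open Asymptotics Filter Topology Polynomial

lemma iteratedDeriv_polyeval (P : ℝ[X]) (n : ℕ) :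
    iteratedDeriv n (fun x => P.eval x) = fun x => (derivative^[n] P).eval x := by
  induction n with
  | zero => simp
  | succ n ih =>
    rw [iteratedDeriv_succ, ih, Function.iterate_succ_apply']
    funext x
    exact Polynomial.deriv (p := derivative^[n] P)

lemma Fpoly_eq (p : ℕ) (j : ℤ) :
    Fpoly p j
      = fun x => (Lagrange.basis (Finset.Icc (-(p:ℤ)) (p:ℤ)) (fun r : ℤ => (r:ℝ)) j).eval x := by
  funext x
  simp only [Fpoly, Lagrange.basis, Lagrange.basisDivisor, eval_prod, eval_mul, eval_C,
    eval_sub, eval_X]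
  exact Finset.prod_congr rfl fun r _ => div_eq_inv_mul _ _

lemma delta_eq (p k : ℕ) (j : ℤ) :
    delta p k j
      = (derivative^[k]
          (Lagrange.basis (Finset.Icc (-(p:ℤ)) (p:ℤ)) (fun r : ℤ => (r:ℝ)) j)).eval 0 := by
  rw [delta, Fpoly_eq, iteratedDeriv_polyeval]

lemma injOn_cast (p : ℕ) :
    Set.InjOn (fun r : ℤ => (r:ℝ)) (Finset.Icc (-(p:ℤ)) (p:ℤ)) :=
  fun a _ b _ h => Int.cast_injective h

lemma card_Icc_int (p : ℕ) : (Finset.Icc (-(p:ℤ)) (p:ℤ)).card = 2*p+1 := by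
  rw [Int.card_Icc]
  omega

lemma moment (p k : ℕ) (i : ℕ) (hi : i ≤ 2*p) :
    ∑ j ∈ Finset.Icc (-(p:ℤ)) (p:ℤ), delta p k j * (j:ℝ)^i
      = if i = k then (k.factorial : ℝ) else 0 := by
  have hX : (X : ℝ[X])^i
      = Lagrange.interpolate (Finset.Icc (-(p:ℤ)) (p:ℤ)) (fun r : ℤ => (r:ℝ))
          (fun j => (j:ℝ)^i) := by
    refine Lagrange.eq_interpolate_of_eval_eq _ (injOn_cast p) ?_ ?_
    · rw [degree_X_pow, card_Icc_int]
      exact_mod_cast Nat.lt_succ_of_le (by omega : i ≤ 2*p)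
    · intro j hj; simp
  have h2 := congrArg (fun q : ℝ[X] => (derivative^[k] q).eval 0) hX
  simp only [Lagrange.interpolate_apply, Polynomial.iterate_derivative_sum,
    Polynomial.iterate_derivative_C_mul, eval_finset_sum, eval_mul, eval_C] at h2
  rw [Polynomial.iterate_derivative_X_pow_eq_natCast_mul, eval_mul, eval_natCast, eval_pow,
    eval_X] at h2
  have h3 : ∑ j ∈ Finset.Icc (-(p:ℤ)) (p:ℤ), delta p k j * (j:ℝ)^i
      = ∑ x ∈ Finset.Icc (-(p:ℤ)) (p:ℤ), (x:ℝ) ^ i *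
        eval 0 (derivative^[k] (Lagrange.basis (Finset.Icc (-(p:ℤ)) (p:ℤ)) (fun r : ℤ => (r:ℝ)) x)) :=
    Finset.sum_congr rfl fun j _ => by rw [delta_eq, mul_comm]
  rw [h3, ← h2]
  by_cases h : i = k
  · subst h; simp [Nat.descFactorial_self]
  · rcases Nat.lt_or_ge i k with hlt | hge
    · simp [Nat.descFactorial_eq_zero_iff_lt.mpr hlt, h]
    · have h4 : i - k ≠ 0 := Nat.sub_ne_zero_of_lt (lt_of_le_of_ne hge (Ne.symm h))
      simp [zero_pow h4, h]

lemma Fpoly_neg (p : ℕ) (j : ℤ) : Fpoly p (-j) = fun x => Fpoly p j (-x) := by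
  funext x
  unfold Fpoly
  refine Finset.prod_equiv (Equiv.neg ℤ) ?_ ?_
  · intro i
    simp only [Finset.mem_erase, Finset.mem_Icc, Equiv.neg_apply]
    omega
  · intro i hi
    simp only [Equiv.neg_apply]
    rw [show (-x - ((-i:ℤ):ℝ)) = -(x - (i:ℝ)) by push_cast; ring,
      show ((j:ℝ) - ((-i:ℤ):ℝ)) = -(((-j:ℤ):ℝ) - (i:ℝ)) by push_cast; ring,
      neg_div_neg_eq]

lemma delta_neg (p k : ℕ) (j : ℤ) : delta p k (-j) = (-1:ℝ)^k * delta p k j := by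
  rw [delta, Fpoly_neg, iteratedDeriv_comp_neg, neg_zero, smul_eq_mul, delta]

lemma moment_odd (p k : ℕ) (hk : Even k) :
    ∑ j ∈ Finset.Icc (-(p:ℤ)) (p:ℤ), delta p k j * (j:ℝ)^(2*p+1) = 0 := by
  have h : ∑ j ∈ Finset.Icc (-(p:ℤ)) (p:ℤ), delta p k j * (j:ℝ)^(2*p+1)
      = ∑ j ∈ Finset.Icc (-(p:ℤ)) (p:ℤ), -(delta p k j * (j:ℝ)^(2*p+1)) := by
    refine Finset.sum_equiv (Equiv.neg ℤ) ?_ ?_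
    · intro i; simp only [Finset.mem_Icc, Equiv.neg_apply]; omega
    · intro i _
      simp only [Equiv.neg_apply]
      rw [delta_neg, hk.neg_one_pow, one_mul,
        show (((-i:ℤ)):ℝ) = -(i:ℝ) by push_cast; ring,
        Odd.neg_pow ⟨p, rfl⟩]
      ring
  rw [Finset.sum_neg_distrib] at h
  linarith

lemma vanish_isBigO : ∀ (n : ℕ) (g : ℝ → ℝ), ContDiff ℝ (n+1) g →
    (∀ i ≤ n, iteratedDeriv i g 0 = 0) → g =O[𝓝 (0:ℝ)] fun y => y^(n+1) := by
  intro n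
  induction n with
  | zero =>
    intro g hg h0
    have hd : DifferentiableAt ℝ g 0 :=
      (hg.differentiable (by norm_num)).differentiableAt
    have h := hd.isBigO_sub
    have hg0 : g 0 = 0 := by simpa using h0 0 le_rfl
    simp only [hg0, sub_zero, zero_add, pow_one] at h ⊢
    exact h.congr_left fun _ => rfl
  | succ n ih =>
    intro g hg h0
    have hdiff : Differentiable ℝ g := hg.differentiable (by norm_num)
    have hg' : ContDiff ℝ (n+1) (deriv g) := by
      have h2 : ContDiff ℝ ((n+1:ℕ)+1) g := by exact_mod_cast hg
      rw [contDiff_succ_iff_deriv] at h2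
      exact_mod_cast h2.2.2
    have h0' : ∀ i ≤ n, iteratedDeriv i (deriv g) 0 = 0 := fun i hi => by
      rw [← iteratedDeriv_succ']
      exact h0 (i+1) (by omega)
    obtain ⟨C, hC⟩ := (ih (deriv g) hg' h0').bound
    obtain ⟨ε, hε, hCε⟩ := Metric.eventually_nhds_iff.mp hC
    refine IsBigO.of_bound (max C 0) (Metric.eventually_nhds_iff.mpr ⟨ε, hε, fun y hy => ?_⟩)
    simp only [Real.dist_eq, sub_zero] at hy
    have key : ‖g y - g 0‖ ≤ (max C 0 * |y|^(n+1)) * ‖y - 0‖ := by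
      refine (convex_Icc (-|y|) (|y|)).norm_image_sub_le_of_norm_deriv_le
        (fun t _ => hdiff.differentiableAt) (fun t ht => ?_) ?_ ?_
      · obtain ⟨ht1, ht2⟩ := Set.mem_Icc.mp ht
        have htn : dist t 0 < ε := by
          simp only [Real.dist_eq, sub_zero]
          exact lt_of_le_of_lt (abs_le.mpr ⟨ht1, ht2⟩) hy
        calc ‖deriv g t‖ ≤ C * ‖t^(n+1)‖ := hCε htn
          _ ≤ max C 0 * ‖t^(n+1)‖ := by
              exact mul_le_mul_of_nonneg_right (le_max_left _ _) (norm_nonneg _)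
          _ ≤ max C 0 * |y|^(n+1) := by
              refine mul_le_mul_of_nonneg_left ?_ (le_max_right _ _)
              rw [norm_pow, Real.norm_eq_abs]
              exact pow_le_pow_left₀ (abs_nonneg _) (abs_le.mpr ⟨ht1, ht2⟩) _
      · exact Set.mem_Icc.mpr ⟨neg_nonpos.mpr (abs_nonneg _), abs_nonneg _⟩
      · exact Set.mem_Icc.mpr ⟨neg_abs_le _, le_abs_self _⟩
    have hg0 : g 0 = 0 := by simpa using h0 0 (by omega)
    rw [hg0, sub_zero, sub_zero] at key
    calc ‖g y‖ ≤ (max C 0 * |y|^(n+1)) * ‖y‖ := key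
      _ = max C 0 * ‖y^(n+1+1)‖ := by
          rw [norm_pow, Real.norm_eq_abs]
          ring

lemma iteratedDeriv_sub' {n : ℕ} {f g : ℝ → ℝ} (hf : ContDiff ℝ n f) (hg : ContDiff ℝ n g)
    (x : ℝ) :
    iteratedDeriv n (fun y => f y - g y) x = iteratedDeriv n f x - iteratedDeriv n g x := by
  have h := iteratedDerivWithin_sub (Set.mem_univ x) uniqueDiffOn_univ
    hf.contDiffWithinAt (g := g) hg.contDiffWithinAt
  exact (by simpa [iteratedDerivWithin_univ] using h : iteratedDeriv n (f - g) x = _)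

lemma taylor_remainder_isBigO (n : ℕ) (g : ℝ → ℝ) (hg : ContDiff ℝ (n+1) g) :
    (fun y => g y - ∑ i ∈ Finset.range (n+1), iteratedDeriv i g 0 * y^i / i.factorial)
      =O[𝓝 (0:ℝ)] fun y => y^(n+1) := by
  set T : ℝ → ℝ :=
    fun y => ∑ i ∈ Finset.range (n+1), iteratedDeriv i g 0 * y^i / i.factorial with hT
  set P : ℝ[X] :=
    ∑ i ∈ Finset.range (n+1), C (iteratedDeriv i g 0 / i.factorial) * X^i with hP
  have hTP : T = fun y => P.eval y := by
    funext y
    simp only [hT, hP, eval_finset_sum, eval_mul, eval_C, eval_pow, eval_X]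
    exact Finset.sum_congr rfl fun i _ => by ring
  have hTc : ContDiff ℝ (n+1) T := by
    refine ContDiff.sum fun i _ => ?_
    exact (contDiff_const.mul (contDiff_id.pow i)).div_const _
  have hder : ∀ m ≤ n, iteratedDeriv m T 0 = iteratedDeriv m g 0 := by
    intro m hm
    rw [hTP, iteratedDeriv_polyeval]
    show ((derivative^[m] P).eval 0) = iteratedDeriv m g 0
    rw [← Polynomial.coeff_zero_eq_eval_zero, Polynomial.coeff_iterate_derivative]
    have hc : P.coeff m = iteratedDeriv m g 0 / m.factorial := by
      simp only [hP, Polynomial.finset_sum_coeff, Polynomial.coeff_C_mul,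
        Polynomial.coeff_X_pow]
      rw [Finset.sum_eq_single m]
      · simp
      · intro i _ hne; simp [Ne.symm hne]
      · intro hmem; exact absurd (Finset.mem_range.mpr (by omega)) hmem
    rw [zero_add, hc, Nat.descFactorial_self, nsmul_eq_mul]
    field_simp
  refine vanish_isBigO n _ (hg.sub hTc) ?_
  intro i hi
  have hle : (i : WithTop ℕ∞) ≤ (n : WithTop ℕ∞) + 1 := by
    norm_cast
    exact_mod_cast Nat.le_succ_of_le hi
  have h1 : ContDiff ℝ i g := hg.of_le hle
  have h2 : ContDiff ℝ i T := hTc.of_le hle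
  rw [iteratedDeriv_sub' h1 h2, hder i hi, sub_self]


/-- Order of accuracy of the centered (2p+1)-point differentiation formula for
the k-th derivative: for f of class C^{α_k+1},
(1/h^k) ∑_j δ^k_{p,j} f(x + jh) - f^{(k)}(x) - (φ_k/α_k!) h^{α_k-k} f^{(α_k)}(x) = O(h^{α_k-k+1})
as h → 0⁺, where α_k = 2p+1 for odd k, α_k = 2p+2 for even k, and
φ_k = ∑_j δ^k_{p,j} j^{α_k}. In particular the formula has order α_k - k. -/
theorem centered_formula_order (p k : ℕ) (hp : 1 ≤ p) (hk1 : 1 ≤ k) (hk2 : k ≤ 2*p)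
    (α : ℕ) (hα : α = if Odd k then 2*p+1 else 2*p+2)
    (φ : ℝ) (hφ : φ = ∑ j ∈ Finset.Icc (-(p:ℤ)) (p:ℤ), delta p k j * (j:ℝ)^α)
    (f : ℝ → ℝ) (hf : ContDiff ℝ (α+1) f) (x : ℝ) :
    (fun h : ℝ =>
        (1/h^k) * ∑ j ∈ Finset.Icc (-(p:ℤ)) (p:ℤ), delta p k j * f (x + (j:ℝ)*h)
          - iteratedDeriv k f x
          - (φ / (Nat.factorial α : ℝ)) * h^(α-k) * iteratedDeriv α f x)
      =O[𝓝[>] (0:ℝ)] (fun h : ℝ => h^(α-k+1)) := by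
  have hα' : α = 2*p+1 ∨ α = 2*p+2 := by
    rw [hα]; split_ifs <;> simp
  have hkα : k ≤ α := by omega
  set s : Finset ℤ := Finset.Icc (-(p:ℤ)) (p:ℤ) with hs
  set g : ℝ → ℝ := fun y => f (x + y) with hg
  have hgc : ContDiff ℝ (α+1) g := hf.comp (contDiff_const.add contDiff_id)
  set c : ℕ → ℝ := fun i => iteratedDeriv i g 0 with hc
  have hci : ∀ i, c i = iteratedDeriv i f x := fun i => by
    rw [hc, hg]
    have h2 := iteratedDeriv_comp_const_add i f x
    calc iteratedDeriv i (fun y => f (x + y)) 0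
        = iteratedDeriv i f (x + 0) := by rw [h2]
      _ = iteratedDeriv i f x := by rw [add_zero]
  set T : ℝ → ℝ := fun y => ∑ i ∈ Finset.range (α+1), c i * y^i / i.factorial with hT
  set R : ℝ → ℝ := fun y => g y - T y with hRdef
  have hR : R =O[𝓝 (0:ℝ)] fun y => y^(α+1) := taylor_remainder_isBigO α g hgc
  have hmom : ∀ i < α, ∑ j ∈ s, delta p k j * (j:ℝ)^i
      = if i = k then (k.factorial:ℝ) else 0 := by
    intro i hi
    by_cases h2 : i ≤ 2*p
    · exact moment p k i h2
    · have hi2 : i = 2*p+1 := by omega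
      have hkev : Even k := by
        by_contra hodd
        rw [Nat.not_even_iff_odd] at hodd
        rw [hα, if_pos hodd] at hi
        omega
      rw [hi2, moment_odd p k hkev, if_neg (by omega)]
  have hkey : ∀ h : ℝ, h ≠ 0 →
      (1/h^k) * ∑ j ∈ s, delta p k j * f (x + (j:ℝ)*h)
        - iteratedDeriv k f x - (φ / (Nat.factorial α : ℝ)) * h^(α-k) * iteratedDeriv α f x
      = (1/h^k) * ∑ j ∈ s, delta p k j * R ((j:ℝ)*h) := by
    intro h hh
    have hfT : ∀ j : ℤ, f (x + (j:ℝ)*h) = T ((j:ℝ)*h) + R ((j:ℝ)*h) := fun j => by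
      rw [hRdef, hg]; ring
    have hsplit : ∑ j ∈ s, delta p k j * f (x + (j:ℝ)*h)
        = (∑ j ∈ s, delta p k j * T ((j:ℝ)*h)) + ∑ j ∈ s, delta p k j * R ((j:ℝ)*h) := by
      rw [← Finset.sum_add_distrib]
      exact Finset.sum_congr rfl fun j _ => by rw [hfT j, mul_add]
    have hsumT : ∑ j ∈ s, delta p k j * T ((j:ℝ)*h)
        = iteratedDeriv k f x * h^k + c α * h^α / α.factorial * φ := by
      calc ∑ j ∈ s, delta p k j * T ((j:ℝ)*h)
          = ∑ j ∈ s, ∑ i ∈ Finset.range (α+1),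
              (c i * h^i / i.factorial) * (delta p k j * (j:ℝ)^i) := by
            refine Finset.sum_congr rfl fun j _ => ?_
            rw [hT, Finset.mul_sum]
            refine Finset.sum_congr rfl fun i _ => ?_
            rw [mul_pow]; ring
        _ = ∑ i ∈ Finset.range (α+1),
              (c i * h^i / i.factorial) * ∑ j ∈ s, delta p k j * (j:ℝ)^i := by
            rw [Finset.sum_comm]
            exact Finset.sum_congr rfl fun i _ => by rw [Finset.mul_sum]
        _ = iteratedDeriv k f x * h^k + c α * h^α / α.factorial * φ := by
            rw [Finset.sum_range_succ]
            have hfront : ∑ i ∈ Finset.range α,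
                (c i * h^i / i.factorial) * (∑ j ∈ s, delta p k j * (j:ℝ)^i)
                = c k * h^k := by
              rw [Finset.sum_eq_single k]
              · rw [hmom k (by omega), if_pos rfl]
                field_simp
              · intro i hi hne
                rw [hmom i (Finset.mem_range.mp hi), if_neg hne, mul_zero]
              · intro hk'
                exact absurd (Finset.mem_range.mpr (by omega)) hk'
            rw [hfront, ← hφ, hci k]
    rw [hsplit, hsumT, show iteratedDeriv α f x = c α from (hci α).symm,
      show h^α = h^(α-k) * h^k by rw [← pow_add, Nat.sub_add_cancel hkα]]
    have hk0 : h^k ≠ 0 := pow_ne_zero _ hh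
    have hfac : (α.factorial:ℝ) ≠ 0 := Nat.cast_ne_zero.mpr α.factorial_ne_zero
    field_simp
    ring
  have hSR : (fun h : ℝ => ∑ j ∈ s, delta p k j * R ((j:ℝ)*h))
      =O[𝓝[>] (0:ℝ)] fun h => h^(α+1) := by
    refine IsBigO.fun_sum fun j _ => ?_
    have htend : Tendsto (fun h : ℝ => (j:ℝ)*h) (𝓝[>] (0:ℝ)) (𝓝 (0:ℝ)) := by
      have h1 : Tendsto (fun h : ℝ => (j:ℝ)*h) (𝓝 (0:ℝ)) (𝓝 (0:ℝ)) := by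
        simpa using (continuous_mul_left (j:ℝ)).tendsto (0:ℝ)
      exact h1.mono_left nhdsWithin_le_nhds
    have h1 := hR.comp_tendsto htend
    have h2 : (fun h : ℝ => ((j:ℝ)*h)^(α+1)) =O[𝓝[>] (0:ℝ)] fun h => h^(α+1) := by
      simp_rw [mul_pow]
      exact (isBigO_refl (fun h:ℝ => h^(α+1)) _).const_mul_left _
    exact ((h1.trans h2).const_mul_left _)
  have heq : (fun h : ℝ =>
        (1/h^k) * ∑ j ∈ s, delta p k j * f (x + (j:ℝ)*h)
          - iteratedDeriv k f x
          - (φ / (Nat.factorial α : ℝ)) * h^(α-k) * iteratedDeriv α f x)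
      =ᶠ[𝓝[>] (0:ℝ)] fun h => (1/h^k) * ∑ j ∈ s, delta p k j * R ((j:ℝ)*h) := by
    filter_upwards [self_mem_nhdsWithin] with h hh
    exact hkey h (ne_of_gt hh)
  refine heq.trans_isBigO ?_
  obtain ⟨C, hC⟩ := hSR.bound
  refine IsBigO.of_bound C ?_
  filter_upwards [hC, self_mem_nhdsWithin] with h hCh hh
  have hhpos : (0:ℝ) < h := hh
  have hkpos : (0:ℝ) < h^k := pow_pos hhpos _
  calc ‖(1/h^k) * ∑ j ∈ s, delta p k j * R ((j:ℝ)*h)‖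
      = (1/h^k) * ‖∑ j ∈ s, delta p k j * R ((j:ℝ)*h)‖ := by
        rw [norm_mul, Real.norm_eq_abs (1/h^k), abs_of_pos (by positivity)]
    _ ≤ (1/h^k) * (C * ‖h^(α+1)‖) := by
        exact mul_le_mul_of_nonneg_left hCh (by positivity)
    _ = C * ‖h^(α-k+1)‖ := by
        rw [Real.norm_eq_abs, Real.norm_eq_abs, abs_of_pos (pow_pos hhpos _),
          abs_of_pos (pow_pos hhpos _), show α+1 = (α-k+1)+k by omega, pow_add]
        field_simp
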